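/- arXiv:1209.6277 — 2 statements merged into one kernel-verified Lean document; each statement's English description precedes it below -/
import Mathlib

section
/- If f is a nested canalizing function with most dominant canalizing variable π(1) = i, canalizing input value α_1, and canalized output value β_1, then as(f) = (1/2)·(as(f^{(i,-α_1)}) + 1 - f̂^{(i,-α_1)}(∅)·β_1). -/
open Finset

/-- Sign encoding of a Boolean value: `true ↦ 1`, `false ↦ -1`. -/
def bsign (a : Bool) : ℝ := if a then 1 else -1

/-- The character `χ_U(x) = ∏_{i ∈ U} x_i` (inputs encoded as Booleans). -/
def chi {n : ℕ} (U : Finset (Fin n)) (x : Fin n → Bool) : ℝ :=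
  ∏ i ∈ U, bsign (x i)

/-- Fourier coefficient `f̂(U) = 2^{-n} ∑_x f(x) χ_U(x)`. -/
noncomputable def fhat {n : ℕ} (f : (Fin n → Bool) → ℝ) (U : Finset (Fin n)) : ℝ :=
  (∑ x : Fin n → Bool, f x * chi U x) / 2 ^ n

/-- `f` is a (±1-valued) Boolean function. -/
def IsBoolean {n : ℕ} (f : (Fin n → Bool) → ℝ) : Prop := ∀ x, f x = 1 ∨ f x = -1

/-- Restriction `f^{(i,a)}` of `f` obtained by fixing the `i`-th input to `a`. -/
def restrict {n : ℕ} (f : (Fin n → Bool) → ℝ) (i : Fin n) (a : Bool) :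
    (Fin n → Bool) → ℝ :=
  fun x => f (Function.update x i a)

/-- Variable `i` is relevant for `f`. -/
def relevant {n : ℕ} (f : (Fin n → Bool) → ℝ) (i : Fin n) : Prop :=
  ∃ x, f x ≠ f (Function.update x i (!(x i)))

/-- Number of relevant variables of `f`. -/
noncomputable def numRel {n : ℕ} (f : (Fin n → Bool) → ℝ) : ℕ :=
  Nat.card {i : Fin n // relevant f i}

/-- Influence `I_i(f) = Pr[f(X) ≠ f(X ⊕ e_i)]` for uniform `X`. -/
noncomputable def influence {n : ℕ} (f : (Fin n → Bool) → ℝ) (i : Fin n) : ℝ :=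
  (Nat.card {x : Fin n → Bool // f x ≠ f (Function.update x i (!(x i)))} : ℝ) / 2 ^ n

/-- Average sensitivity `as(f) = ∑_i I_i(f)`. -/
noncomputable def avgSens {n : ℕ} (f : (Fin n → Bool) → ℝ) : ℝ :=
  ∑ i : Fin n, influence f i

/-- `IsNCFwith f L` : `f` is a nested canalizing function with the nested canalizing
structure recorded by the list `L` of triples `(π(j), α_j, β_j)`: fixing variable
`π(j)` to its canalizing value `α_j` forces the output `β_j`, and the restriction to
the non-canalizing value continues with the rest of the list; the base case is a
constant (±1) function. -/
inductive IsNCFwith : {n : ℕ} → ((Fin n → Bool) → ℝ) → List (Fin n × Bool × ℝ) → Prop where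
  | const {n : ℕ} (f : (Fin n → Bool) → ℝ) (b : ℝ) (hb : b = 1 ∨ b = -1)
      (h : ∀ x, f x = b) : IsNCFwith f []
  | step {n : ℕ} (f : (Fin n → Bool) → ℝ) (i : Fin n) (a : Bool) (b : ℝ)
      (hb : b = 1 ∨ b = -1) (L : List (Fin n × Bool × ℝ))
      (hrel : relevant f i)
      (hcan : ∀ x, x i = a → f x = b)
      (hrest : IsNCFwith (restrict f i (!a)) L) :
      IsNCFwith f ((i, a, b) :: L)

/-- `f` is a nested canalizing function. -/
def IsNCF {n : ℕ} (f : (Fin n → Bool) → ℝ) : Prop := ∃ L, IsNCFwith f L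

/-- Variable `i` is most dominant: some nested canalizing ordering starts with `i`. -/
def MostDominant {n : ℕ} (f : (Fin n → Bool) → ℝ) (i : Fin n) : Prop :=
  ∃ a b L, IsNCFwith f ((i, a, b) :: L)

/-- The canalized output values `β_1, β_2, …` recorded in `L` alternate in sign. -/
def AltBetas {n : ℕ} (L : List (Fin n × Bool × ℝ)) : Prop :=
  List.Chain' (fun p q : Fin n × Bool × ℝ => q.2.2 = -p.2.2) L

/-
Splitting the cube along coordinate `i`, each influence `I_j(f)` with `j ≠ i` is the mean of the
influences of the two restrictions `f^{(i,α)}` and `f^{(i,¬α)}`, while neither restriction depends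
on `x_i`; hence `2 as(f) = 2 I_i(f) + as(f^{(i,α)}) + as(f^{(i,¬α)})`. Canalization makes
`f^{(i,α)}` the constant `β`, so its average sensitivity vanishes, and `I_i(f)` is the probability
that the `±1`-valued `f^{(i,¬α)}` differs from `β`, namely `(1 - f̂^{(i,¬α)}(∅) β) / 2`.
-/

section BooleanCube

variable {n : ℕ}

theorem restrict_apply (f : (Fin n → Bool) → ℝ) (i : Fin n) (a : Bool) (x : Fin n → Bool) :
    restrict f i a x = f (Function.update x i a) :=
  rfl

theorem sum_update_add_sum_update {M : Type*} [AddCommMonoid M]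
    (h : (Fin n → Bool) → M) (i : Fin n) (a : Bool) :
    ∑ x, h (Function.update x i a) + ∑ x, h (Function.update x i (!a)) = 2 • ∑ x, h x := by
  have hflip : Function.Involutive fun x : Fin n → Bool => Function.update x i (!x i) := by
    intro x
    simp
  have hpair (x : Fin n → Bool) :
      h (Function.update x i a) + h (Function.update x i (!a))
        = h x + h (Function.update x i (!x i)) := by
    rcases Bool.eq_or_eq_not (x i) a with hx | hx
    · rw [← hx, Function.update_eq_self]
    · rw [hx, Bool.not_not, ← hx, Function.update_eq_self, add_comm]
  rw [← sum_add_distrib, Fintype.sum_congr _ _ hpair, sum_add_distrib, two_nsmul]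
  congr 1
  exact Equiv.sum_comp hflip.toPerm h

theorem influence_eq_sum (f : (Fin n → Bool) → ℝ) (j : Fin n) :
    influence f j
      = (∑ x, if f x ≠ f (Function.update x j (!x j)) then (1 : ℝ) else 0) / 2 ^ n := by
  classical
  rw [influence, Nat.card_eq_fintype_card, Fintype.card_subtype, card_filter]
  push_cast
  rfl

theorem influence_eq_sum_restrict (f : (Fin n → Bool) → ℝ) (i : Fin n) (a : Bool) :
    influence f i
      = (∑ x, if restrict f i a x ≠ restrict f i (!a) x then (1 : ℝ) else 0) / 2 ^ n := by
  have hsens (c : Bool) (x : Fin n → Bool) :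
      (if f (Function.update x i c)
          ≠ f (Function.update (Function.update x i c) i (!Function.update x i c i))
        then (1 : ℝ) else 0)
        = if restrict f i c x ≠ restrict f i (!c) x then 1 else 0 := by
    simp only [Function.update_self, Function.update_idem, restrict_apply]
    congr 1 -- the two sides differ only in their `Decidable` instances
  have hsymm (x : Fin n → Bool) :
      (if restrict f i (!a) x ≠ restrict f i (!!a) x then (1 : ℝ) else 0)
        = if restrict f i a x ≠ restrict f i (!a) x then 1 else 0 := by
    rw [Bool.not_not]
    exact if_congr ne_comm rfl rfl
  have hsplit := sum_update_add_sum_update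
    (fun x => if f x ≠ f (Function.update x i (!x i)) then (1 : ℝ) else 0) i a
  simp only [hsens, hsymm, two_nsmul] at hsplit
  rw [influence_eq_sum]
  congr 1
  linarith

theorem influence_restrict_self (f : (Fin n → Bool) → ℝ) (i : Fin n) (a : Bool) :
    influence (restrict f i a) i = 0 := by
  simp [influence_eq_sum, restrict_apply]

theorem two_mul_influence_of_ne (f : (Fin n → Bool) → ℝ) {i j : Fin n} (hji : j ≠ i)
    (a : Bool) :
    2 * influence f j = influence (restrict f i a) j + influence (restrict f i (!a)) j := by
  have hsens (c : Bool) (x : Fin n → Bool) :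
      f (Function.update x i c)
        = restrict f i c x ∧
      f (Function.update (Function.update x i c) j (!Function.update x i c j))
        = restrict f i c (Function.update x j (!x j)) := by
    refine ⟨rfl, ?_⟩
    rw [Function.update_of_ne hji, restrict_apply, Function.update_comm hji]
  simp only [influence_eq_sum, ← add_div, ← mul_div_assoc]
  rw [two_mul, ← two_nsmul, ← sum_update_add_sum_update _ i a]
  simp only [hsens]

theorem avgSens_eq_zero_of_forall_eq {f : (Fin n → Bool) → ℝ} {c : ℝ} (hf : ∀ x, f x = c) :
    avgSens f = 0 := by
  simp [avgSens, influence_eq_sum, hf]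

theorem two_mul_avgSens (f : (Fin n → Bool) → ℝ) (i : Fin n) (a : Bool) :
    2 * avgSens f
      = 2 * influence f i + avgSens (restrict f i a) + avgSens (restrict f i (!a)) := by
  simp only [avgSens, mul_sum, add_assoc, ← sum_add_distrib]
  rw [← add_sum_erase _ _ (mem_univ i), ← add_sum_erase _ _ (mem_univ i),
    influence_restrict_self, influence_restrict_self, add_zero, zero_add]
  congr 1
  exact sum_congr rfl fun j hj => two_mul_influence_of_ne f (ne_of_mem_erase hj) a

theorem fhat_empty (f : (Fin n → Bool) → ℝ) : fhat f ∅ = (∑ x, f x) / 2 ^ n := by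
  simp [fhat, chi]

theorem influence_eq_of_canalizing {f : (Fin n → Bool) → ℝ} {i : Fin n} {a : Bool} {b : ℝ}
    (hb : b = 1 ∨ b = -1) (hcan : ∀ x, x i = a → f x = b)
    (hg : IsBoolean (restrict f i (!a))) :
    influence f i = (1 - fhat (restrict f i (!a)) ∅ * b) / 2 := by
  have hpt (x : Fin n → Bool) :
      (if restrict f i a x ≠ restrict f i (!a) x then (1 : ℝ) else 0)
        = (1 - restrict f i (!a) x * b) / 2 := by
    rw [restrict_apply f i a, hcan _ (Function.update_self i a x)]
    rcases hg x with hx | hx <;> rcases hb with rfl | rfl <;> norm_num [hx]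
  rw [influence_eq_sum_restrict f i a, Fintype.sum_congr _ _ hpt, fhat_empty, ← sum_div,
    sum_sub_distrib, ← sum_mul, sum_const, card_univ, Fintype.card_fun, Fintype.card_bool,
    Fintype.card_fin]
  field_simp
  ring

end BooleanCube

theorem IsNCFwith.isBoolean {n : ℕ} {f : (Fin n → Bool) → ℝ} {L : List (Fin n × Bool × ℝ)}
    (h : IsNCFwith f L) : IsBoolean f := by
  induction h with
  | const f b hb hfb => exact fun x => hfb x ▸ hb
  | step f i a b hb L _ hcan _ ih =>
    intro x
    rcases Bool.eq_or_eq_not (x i) a with hx | hx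
    · exact hcan x hx ▸ hb
    · have := ih x
      rwa [restrict_apply, ← hx, Function.update_eq_self] at this

/-- Recursion for the average sensitivity of an NCF whose nested canalizing ordering
starts with variable `i`, canalizing input value `a` and canalized output `b`. -/
theorem avgSens_ncf_recursion {n : ℕ} (f : (Fin n → Bool) → ℝ)
    (i : Fin n) (a : Bool) (b : ℝ) (L : List (Fin n × Bool × ℝ))
    (hf : IsNCFwith f ((i, a, b) :: L)) :
    avgSens f = (1 / 2) * (avgSens (restrict f i (!a)) + 1
      - fhat (restrict f i (!a)) ∅ * b) := by
  obtain ⟨hb, hcan, hrest⟩ : (b = 1 ∨ b = -1) ∧ (∀ x, x i = a → f x = b) ∧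
      IsNCFwith (restrict f i (!a)) L := by
    cases hf with
    | step _ _ _ _ hb _ _ hcan hrest => exact ⟨hb, hcan, hrest⟩
  have hcanalized : ∀ x, restrict f i a x = b := fun x => hcan _ (Function.update_self i a x)
  have h := two_mul_avgSens f i a
  rw [avgSens_eq_zero_of_forall_eq hcanalized,
    influence_eq_of_canalizing hb hcan hrest.isBoolean] at h
  linarith
end

section
/- If f is a nested canalizing function with k relevant variables and alternating canalized values β = (+1,-1,+1,-1,...) or (-1,+1,-1,+1,...), then |f̂(∅)| = (1/3)·((-1)^k/2^{k-1} + 1). -/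
open Finset

/-! The mean `f̂(∅)` is the average of the means of the two restrictions along any variable. Along
the first canalizing variable one restriction is the constant `β₁` and the other is an NCF with one
relevant variable fewer whose first canalized value is `-β₁`, so the normalised mean
`g(k) = f̂(∅) / β₁` satisfies `g(k + 1) = (1 - g(k)) / 2`, with `g(1) = 0` because relevance of the
last canalizing variable forces the final constant to be `-β_k`. -/

section Mean

variable {n : ℕ}

lemma fhat_empty_eq (f : (Fin n → Bool) → ℝ) :
    fhat f ∅ = (∑ x : Fin n → Bool, f x) / 2 ^ n := by
  simp [fhat, chi]

lemma fhat_empty_of_forall_eq {f : (Fin n → Bool) → ℝ} {c : ℝ} (h : ∀ x, f x = c) :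
    fhat f ∅ = c := by
  rw [fhat_empty_eq, Fintype.sum_congr _ _ h, Finset.sum_const, Finset.card_univ]
  simp

lemma restrict_apply_of_eq (f : (Fin n → Bool) → ℝ) {i : Fin n} {a : Bool}
    {x : Fin n → Bool} (h : x i = a) : restrict f i a x = f x := by
  rw [_root_.restrict, ← h, Function.update_eq_self]

lemma involutive_update_not (i : Fin n) :
    Function.Involutive fun x : Fin n → Bool => Function.update x i (!(x i)) := fun x => by
  simp [Function.update_idem]

lemma sum_comp_update_not (i : Fin n) (F : (Fin n → Bool) → ℝ) :
    ∑ x : Fin n → Bool, F (Function.update x i (!(x i))) = ∑ x : Fin n → Bool, F x :=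
  Equiv.sum_comp (Function.Involutive.toPerm _ (involutive_update_not i)) F

lemma restrict_eq_of_canalizing {f : (Fin n → Bool) → ℝ} {i : Fin n} {a : Bool} {b : ℝ}
    (hcan : ∀ x, x i = a → f x = b) (x : Fin n → Bool) : restrict f i a x = b :=
  hcan _ (Function.update_self ..)

lemma restrict_add_restrict_not (f : (Fin n → Bool) → ℝ) (i : Fin n) (a : Bool)
    (x : Fin n → Bool) :
    restrict f i a x + restrict f i (!a) x = f x + f (Function.update x i (!(x i))) := by
  rcases Bool.eq_or_eq_not a (x i) with rfl | rfl
  · rw [restrict_apply_of_eq f rfl]; rfl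
  · rw [Bool.not_not, restrict_apply_of_eq f rfl, add_comm]; rfl

lemma fhat_empty_eq_avg_restrict (f : (Fin n → Bool) → ℝ) (i : Fin n) (a : Bool) :
    fhat f ∅ = (fhat (restrict f i a) ∅ + fhat (restrict f i (!a)) ∅) / 2 := by
  have hsum : ∑ x, restrict f i a x + ∑ x, restrict f i (!a) x = 2 * ∑ x, f x := by
    rw [← Finset.sum_add_distrib, Fintype.sum_congr _ _ (restrict_add_restrict_not f i a),
      Finset.sum_add_distrib, sum_comp_update_not i f, two_mul]
  simp only [fhat_empty_eq, ← add_div, hsum]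
  ring

end Mean

section Relevance

variable {n : ℕ}

lemma not_relevant_restrict_self (f : (Fin n → Bool) → ℝ) (i : Fin n) (a : Bool) :
    ¬ relevant (restrict f i a) i := by
  rintro ⟨x, hx⟩
  exact hx (by simp [_root_.restrict])

lemma relevant_restrict_not_iff {f : (Fin n → Bool) → ℝ} {i j : Fin n} {a : Bool} {b : ℝ}
    (hcan : ∀ x, x i = a → f x = b) (hj : j ≠ i) :
    relevant (restrict f i (!a)) j ↔ relevant f j := by
  constructor
  · rintro ⟨x, hx⟩
    refine ⟨Function.update x i (!a), ?_⟩
    rwa [Function.update_comm hj.symm, Function.update_of_ne hj]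
  · rintro ⟨x, hx⟩
    -- `x` cannot lie on the canalized face `x i = a`, where both values are `b`.
    have hxi : x i = !a := by
      refine (Bool.eq_or_eq_not _ _).resolve_left fun hxa => hx ?_
      rw [hcan x hxa, hcan _ (by rwa [Function.update_of_ne hj.symm])]
    refine ⟨x, ?_⟩
    rwa [restrict_apply_of_eq f hxi,
      restrict_apply_of_eq f (by rwa [Function.update_of_ne hj.symm])]

open Classical in
lemma numRel_eq_card_filter (f : (Fin n → Bool) → ℝ) :
    numRel f = (Finset.univ.filter (relevant f)).card := by
  rw [numRel, Nat.card_eq_fintype_card, Fintype.card_subtype]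

lemma numRel_eq_zero_of_forall_eq {f : (Fin n → Bool) → ℝ} {c : ℝ} (h : ∀ x, f x = c) :
    numRel f = 0 := by
  classical
  rw [numRel_eq_card_filter, Finset.card_eq_zero, Finset.filter_eq_empty_iff]
  rintro j - ⟨x, hx⟩
  exact hx (by rw [h, h])

lemma numRel_eq_numRel_restrict_not_add_one {f : (Fin n → Bool) → ℝ} {i : Fin n} {a : Bool}
    {b : ℝ} (hrel : relevant f i) (hcan : ∀ x, x i = a → f x = b) :
    numRel f = numRel (restrict f i (!a)) + 1 := by
  classical
  have hset : Finset.univ.filter (relevant f)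
      = insert i (Finset.univ.filter (relevant (restrict f i (!a)))) := by
    ext j
    rcases eq_or_ne j i with rfl | hj
    · simp [hrel]
    · simp [hj, relevant_restrict_not_iff hcan hj]
  rw [numRel_eq_card_filter, numRel_eq_card_filter, hset,
    Finset.card_insert_of_notMem (by simp [not_relevant_restrict_self])]

theorem IsNCFwith.numRel_eq_length {f : (Fin n → Bool) → ℝ} {L : List (Fin n × Bool × ℝ)}
    (hf : IsNCFwith f L) : numRel f = L.length := by
  induction hf with
  | const f b _ h => exact numRel_eq_zero_of_forall_eq h
  | step f i a b _ L hrel hcan _ ih =>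
    rw [numRel_eq_numRel_restrict_not_add_one hrel hcan, ih, List.length_cons]

lemma restrict_not_eq_neg_of_relevant {f : (Fin n → Bool) → ℝ} {i : Fin n} {a : Bool}
    {b c : ℝ} (hb : b = 1 ∨ b = -1) (hc : c = 1 ∨ c = -1) (hrel : relevant f i)
    (hcan : ∀ x, x i = a → f x = b) (hconst : ∀ x, restrict f i (!a) x = c) : c = -b := by
  have hcb : c ≠ b := by
    rintro rfl
    have hfc : ∀ x, f x = c := fun x => by
      rcases Bool.eq_or_eq_not (x i) a with hxa | hxa
      · exact hcan x hxa
      · rw [← restrict_apply_of_eq f hxa, hconst]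
    obtain ⟨x, hx⟩ := hrel
    exact hx (by rw [hfc, hfc])
  rcases hb with rfl | rfl <;> rcases hc with rfl | rfl <;> norm_num at hcb <;> norm_num

end Relevance

/-- The mean of an NCF with alternating canalized values and `k` relevant variables, divided by
its first canalized value. -/
noncomputable def altMean (k : ℕ) : ℝ := (1 + 2 * (-1 / 2) ^ k) / 3

lemma altMean_succ (k : ℕ) : altMean (k + 1) = (1 - altMean k) / 2 := by
  rw [altMean, altMean, pow_succ]
  ring

lemma altMean_mem_Icc (k : ℕ) : altMean k ∈ Set.Icc (0 : ℝ) 1 := by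
  induction k with
  | zero => norm_num [altMean]
  | succ k ih =>
    rw [altMean_succ]
    constructor <;> linarith [ih.1, ih.2]

lemma altMean_eq {k : ℕ} (hk : 1 ≤ k) :
    altMean k = (1 / 3) * ((-1 : ℝ) ^ k / 2 ^ (k - 1) + 1) := by
  obtain ⟨m, rfl⟩ := Nat.exists_eq_add_of_le' hk
  rw [altMean, Nat.add_sub_cancel, pow_succ, pow_succ, div_pow]
  field_simp
  ring

theorem IsNCFwith.fhat_empty_of_altBetas {n : ℕ} {f : (Fin n → Bool) → ℝ} {i : Fin n}
    {a : Bool} {b : ℝ} {L : List (Fin n × Bool × ℝ)} (hf : IsNCFwith f ((i, a, b) :: L))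
    (halt : AltBetas ((i, a, b) :: L)) : fhat f ∅ = b * altMean (L.length + 1) := by
  induction L generalizing f i a b with
  | nil =>
    cases hf with
    | step _ _ _ _ hb _ hrel hcan hrest =>
    cases hrest with
    | const _ c hc hconst =>
    rw [fhat_empty_eq_avg_restrict f i a, fhat_empty_of_forall_eq (restrict_eq_of_canalizing hcan),
      fhat_empty_of_forall_eq hconst, restrict_not_eq_neg_of_relevant hb hc hrel hcan hconst]
    norm_num [altMean]
  | cons p L ih =>
    obtain ⟨j, a', b'⟩ := p
    cases hf with
    | step _ _ _ _ _ _ _ hcan hrest =>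
    obtain ⟨hb' : b' = -b, halt'⟩ := List.isChain_cons_cons.mp halt
    rw [fhat_empty_eq_avg_restrict f i a, fhat_empty_of_forall_eq (restrict_eq_of_canalizing hcan),
      ih hrest halt', hb', List.length_cons, altMean_succ (L.length + 1)]
    ring

/-- Zero coefficient of an NCF with alternating canalized values. -/
theorem fhat_empty_ncf_alternating {n : ℕ} (f : (Fin n → Bool) → ℝ)
    (L : List (Fin n × Bool × ℝ)) (hf : IsNCFwith f L) (hne : L ≠ [])
    (halt : AltBetas L) (k : ℕ) (hk : numRel f = k) :
    |fhat f ∅| = (1 / 3) * ((-1 : ℝ) ^ k / 2 ^ (k - 1) + 1) := by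
  obtain ⟨⟨i, a, b⟩, L, rfl⟩ := List.exists_cons_of_ne_nil hne
  have hb : b = 1 ∨ b = -1 := by cases hf; assumption
  rw [hf.fhat_empty_of_altBetas halt, ← hk, hf.numRel_eq_length,
    abs_mul, abs_of_nonneg (altMean_mem_Icc _).1, altMean_eq (by simp)]
  rcases hb with rfl | rfl <;> norm_num
end
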